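/- arXiv:2505.15424 — 2 statements merged into one kernel-verified Lean document; each statement's English description precedes it below -/
import Mathlib

section
/- Consider a gating module g(x) = f(⟨G_{L+1}, p_L(x)⟩), where p₀(x) = φ(x) ∈ ℝ^{d₀} for a fixed feature map φ on an input set X, p_l(x) = σ(G_l · p_{l−1}(x)) componentwise for l = 1,…,L with G_l ∈ ℝ^{d_l × d_{l−1}}, σ : ℝ → ℝ, G_{L+1} ∈ ℝ^{d_L}, and f : ℝ → ℝ. Let S ⊆ X and define 𝓜_l = span{ p_{l−1}(x) : x ∈ S } for l = 1,…,L+1, computed with the weights (G_1,…,G_L). Suppose ΔG_l · p = 0 for every p ∈ 𝓜_l and each l = 1,…,L, and ⟨ΔG_{L+1}, p⟩ = 0 for every p ∈ 𝓜_{L+1}, where ΔG_{L+1} ∈ ℝ^{d_L}. Then for every x ∈ S, the output of the gating module with updated weights (G_1 + ΔG_1, …, G_L + ΔG_L, G_{L+1} + ΔG_{L+1}) equals g(x), the output with the original weights. -/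
open Matrix

/-- Activations of the gating module: `acts σ d G p0 l` is the activation `p_l`
produced from the input feature `p0 = φ(x)` by applying, at each layer,
the weight matrix `G l` followed by the componentwise nonlinearity `σ`. -/
def acts (σ : ℝ → ℝ) (d : ℕ → ℕ)
    (G : (l : ℕ) → Matrix (Fin (d (l + 1))) (Fin (d l)) ℝ)
    (p0 : Fin (d 0) → ℝ) : (l : ℕ) → Fin (d l) → ℝ
  | 0 => p0
  | l + 1 => fun i => σ ((G l *ᵥ acts σ d G p0 l) i)

/-- Gating module with output `g(x) = f(⟨w, p_L(x)⟩)`.  If each hidden-layer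
update `ΔG l` annihilates the span of the inputs to that layer over `x ∈ S`
(computed with the original weights), and the last-layer update `Δw` has zero
inner product with every vector in the span of the last hidden activations
`p_L(x)` over `x ∈ S`, then the output of the gating module with the updated
weights equals the output with the original weights for every `x ∈ S`. -/
theorem stmt_5 {X : Type*} (L : ℕ) (d : ℕ → ℕ) (σ : ℝ → ℝ) (f : ℝ → ℝ)
    (φ : X → Fin (d 0) → ℝ)
    (G ΔG : (l : ℕ) → Matrix (Fin (d (l + 1))) (Fin (d l)) ℝ)
    (w Δw : Fin (d L) → ℝ)
    (S : Set X)
    (hhidden : ∀ l < L,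
      ∀ p ∈ Submodule.span ℝ ((fun x => acts σ d G (φ x) l) '' S), ΔG l *ᵥ p = 0)
    (hlast : ∀ p ∈ Submodule.span ℝ ((fun x => acts σ d G (φ x) L) '' S),
      Δw ⬝ᵥ p = 0) :
    ∀ x ∈ S,
      f ((w + Δw) ⬝ᵥ acts σ d (fun l => G l + ΔG l) (φ x) L)
        = f (w ⬝ᵥ acts σ d G (φ x) L) := by
  intro x hx
  have key : ∀ l ≤ L, acts σ d (fun l => G l + ΔG l) (φ x) l = acts σ d G (φ x) l := by
    intro l hl
    induction l with
    | zero => rfl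
    | succ n ih =>
      have hn : n ≤ L := Nat.le_of_succ_le hl
      have hmem : acts σ d G (φ x) n ∈
          Submodule.span ℝ ((fun x => acts σ d G (φ x) n) '' S) :=
        Submodule.subset_span ⟨x, hx, rfl⟩
      have hz : ΔG n *ᵥ acts σ d G (φ x) n = 0 :=
        hhidden n (Nat.lt_of_succ_le hl) _ hmem
      funext i
      show σ (((G n + ΔG n) *ᵥ acts σ d (fun l => G l + ΔG l) (φ x) n) i)
        = σ ((G n *ᵥ acts σ d G (φ x) n) i)
      rw [ih hn, Matrix.add_mulVec, hz, add_zero]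
  have hL : acts σ d (fun l => G l + ΔG l) (φ x) L = acts σ d G (φ x) L := key L le_rfl
  have hmemL : acts σ d G (φ x) L ∈
      Submodule.span ℝ ((fun x => acts σ d G (φ x) L) '' S) :=
    Submodule.subset_span ⟨x, hx, rfl⟩
  have hzL : Δw ⬝ᵥ acts σ d G (φ x) L = 0 := hlast _ hmemL
  rw [hL, add_dotProduct, hzL, add_zero]
end

section
/- Consider a gating module with p₀(x) = φ(x) ∈ ℝ^{d₀} for a fixed feature map φ, p_l(x) = σ(G_l · p_{l−1}(x)) componentwise for l = 1,…,L, and output g(x) = f(⟨G_{L+1}, p_L(x)⟩) with f : ℝ → ℝ satisfying f(0) = 0. Let S be a set of inputs and 𝓜_l = span{ p_{l−1}(x) : x ∈ S } for l = 1,…,L+1, computed with the initial weights (G_1,…,G_L, G_{L+1}). Suppose (i) ⟨G_{L+1}, p⟩ = 0 for every p ∈ 𝓜_{L+1} (initialization constraint), and (ii) the updates satisfy ΔG_l · p = 0 for every p ∈ 𝓜_l (l = 1,…,L) and ⟨ΔG_{L+1}, p⟩ = 0 for every p ∈ 𝓜_{L+1} (updating constraints). Then the gating module with updated weights (G_1 +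 ΔG_1, …, G_L + ΔG_L, G_{L+1} + ΔG_{L+1}) outputs 0 on every x ∈ S. -/
open Matrix

/-- Suppose `f 0 = 0`, the initial last-layer weight `w` has zero inner product with
every vector in the span `𝓜_{L+1}` of the last hidden activations `p_L(x)` over
`x ∈ S` (initialization constraint), each hidden-layer update `ΔG l` annihilates
the span of the inputs to that layer over `x ∈ S`, and the last-layer update `Δw`
has zero inner product with every vector in `𝓜_{L+1}` (updating constraints); all
subspaces being computed with the initial weights.  Then the gating module with the
updated weights outputs `0` on every `x ∈ S`. -/
theorem stmt_7 {X : Type*} (L : ℕ) (d : ℕ → ℕ) (σ : ℝ → ℝ) (f : ℝ → ℝ)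
    (hf : f 0 = 0)
    (φ : X → Fin (d 0) → ℝ)
    (G ΔG : (l : ℕ) → Matrix (Fin (d (l + 1))) (Fin (d l)) ℝ)
    (w Δw : Fin (d L) → ℝ)
    (S : Set X)
    (hinit : ∀ p ∈ Submodule.span ℝ ((fun x => acts σ d G (φ x) L) '' S),
      w ⬝ᵥ p = 0)
    (hhidden : ∀ l < L,
      ∀ p ∈ Submodule.span ℝ ((fun x => acts σ d G (φ x) l) '' S), ΔG l *ᵥ p = 0)
    (hlast : ∀ p ∈ Submodule.span ℝ ((fun x => acts σ d G (φ x) L) '' S),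
      Δw ⬝ᵥ p = 0) :
    ∀ x ∈ S,
      f ((w + Δw) ⬝ᵥ acts σ d (fun l => G l + ΔG l) (φ x) L) = 0 := by
  intro x hx
  have key : ∀ l ≤ L, acts σ d (fun l => G l + ΔG l) (φ x) l = acts σ d G (φ x) l := by
    intro l hl
    induction l with
    | zero => rfl
    | succ k ih =>
      have hk : k ≤ L := Nat.le_of_succ_le hl
      have hkl : k < L := hl
      have hmem : acts σ d G (φ x) k ∈
          Submodule.span ℝ ((fun x => acts σ d G (φ x) k) '' S) :=
        Submodule.subset_span ⟨x, hx, rfl⟩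
      have hz := hhidden k hkl _ hmem
      funext i
      show σ (((G k + ΔG k) *ᵥ acts σ d (fun l => G l + ΔG l) (φ x) k) i) = _
      rw [ih hk, Matrix.add_mulVec, hz]
      simp [acts]
  rw [key L le_rfl]
  have hmem : acts σ d G (φ x) L ∈
      Submodule.span ℝ ((fun x => acts σ d G (φ x) L) '' S) :=
    Submodule.subset_span ⟨x, hx, rfl⟩
  rw [add_dotProduct, hinit _ hmem, hlast _ hmem, add_zero, hf]
end
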